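/- Under the unique-optimum assumption: (a) the stability-under-data-perturbations measure ζ of the primal LP, viewed as the generic LP with affine subspace V_p := q + Null(A) and cost vector c, equals ζ_p; and (b) the measure ζ of the dual slack LP max qᵀ(c−s) over s ∈ (c + Im(Aᵀ)) ∩ ℝⁿ₊, viewed as the generic LP with affine subspace V_d := c + Im(Aᵀ) and cost vector q, equals ζ_d. -/
import Mathlib


open Matrix
open scoped BigOperators

noncomputable section

namespace LPPaper

/-- Euclidean norm of a finite real vector. -/
def enorm {k : ℕ} (v : Fin k → ℝ) : ℝ := Real.sqrt (∑ i, (v i) ^ 2)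

/-- ℓ₁ norm of a finite real vector. -/
def l1 {k : ℕ} (v : Fin k → ℝ) : ℝ := ∑ i, |v i|

/-- Spectral norm (operator 2-norm w.r.t. Euclidean norms) of a real matrix. -/
def specNorm {α β : Type*} [Fintype α] [Fintype β] [DecidableEq β] (M : Matrix α β ℝ) : ℝ :=
  ‖LinearMap.toContinuousLinearMap (Matrix.toEuclideanLin M)‖

variable {m n : ℕ}

/-- Embedding of basic indices (the first `m` coordinates). -/
def bIdx (hmn : m ≤ n) (i : Fin m) : Fin n := Fin.castLE hmn i

/-- Embedding of nonbasic indices (the last `n - m` coordinates). -/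
def nIdx (hmn : m ≤ n) (j : Fin (n - m)) : Fin n := ⟨m + j.val, by have := j.isLt; omega⟩

/-- The basis matrix `B`: the first `m` columns of `A`. -/
def Bmat (hmn : m ≤ n) (A : Matrix (Fin m) (Fin n) ℝ) : Matrix (Fin m) (Fin m) ℝ :=
  Matrix.of fun i j => A i (bIdx hmn j)

/-- The nonbasic matrix `N`: the last `n - m` columns of `A`. -/
def Nmat (hmn : m ≤ n) (A : Matrix (Fin m) (Fin n) ℝ) : Matrix (Fin m) (Fin (n - m)) ℝ :=
  Matrix.of fun i j => A i (nIdx hmn j)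

/-- The simplex tableau `B⁻¹N` at the optimal basis. -/
def BN (hmn : m ≤ n) (A : Matrix (Fin m) (Fin n) ℝ) : Matrix (Fin m) (Fin (n - m)) ℝ :=
  (Bmat hmn A)⁻¹ * Nmat hmn A

/-- `q := Aᵀ(AAᵀ)⁻¹ b`. -/
def qvec (A : Matrix (Fin m) (Fin n) ℝ) (b : Fin m → ℝ) : Fin n → ℝ :=
  Aᵀ *ᵥ ((A * Aᵀ)⁻¹ *ᵥ b)

/-- Primal feasibility: `Ax = b`, `x ≥ 0`. -/
def PrimalFeasible (A : Matrix (Fin m) (Fin n) ℝ) (b : Fin m → ℝ) (x : Fin n → ℝ) : Prop :=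
  A *ᵥ x = b ∧ ∀ i, 0 ≤ x i

/-- Dual feasibility: `Aᵀy + s = c`, `s ≥ 0`. -/
def DualFeasible (A : Matrix (Fin m) (Fin n) ℝ) (c : Fin n → ℝ) (y : Fin m → ℝ)
    (s : Fin n → ℝ) : Prop :=
  Aᵀ *ᵥ y + s = c ∧ ∀ i, 0 ≤ s i

/-- The unique-optimum assumption (Assumption 1 of the paper), with the optimal basis being
(after a permutation of the variables) the set of the first `m` indices: the rows of `A` are
linearly independent, `x*` is the unique primal optimal solution, `(y*, s*)` the unique dual
optimal solution, the basis matrix `B` is invertible, `x*ᵢ > 0` exactly for the first `m`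
indices and `s*ᵢ > 0` exactly for the remaining indices. -/
structure UniqueOpt (hmn : m ≤ n) (A : Matrix (Fin m) (Fin n) ℝ) (b : Fin m → ℝ)
    (c : Fin n → ℝ) (xstar : Fin n → ℝ) (ystar : Fin m → ℝ) (sstar : Fin n → ℝ) : Prop where
  rows_indep : LinearIndependent ℝ (fun i => A i)
  primal_feas : PrimalFeasible A b xstar
  primal_opt : ∀ x, PrimalFeasible A b x → c ⬝ᵥ xstar ≤ c ⬝ᵥ x
  primal_uniq : ∀ x, PrimalFeasible A b x → c ⬝ᵥ x = c ⬝ᵥ xstar → x = xstar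
  dual_feas : DualFeasible A c ystar sstar
  dual_opt : ∀ y s, DualFeasible A c y s → b ⬝ᵥ y ≤ b ⬝ᵥ ystar
  dual_uniq : ∀ y s, DualFeasible A c y s → b ⬝ᵥ y = b ⬝ᵥ ystar → y = ystar ∧ s = sstar
  basis_isUnit : IsUnit (Bmat hmn A).det
  xstar_supp : ∀ i : Fin n, 0 < xstar i ↔ (i : ℕ) < m
  sstar_supp : ∀ i : Fin n, 0 < sstar i ↔ m ≤ (i : ℕ)

/-- The `max` factor appearing in the geometric condition number `Φ`. -/
def PhiFactor (hmn : m ≤ n) (A : Matrix (Fin m) (Fin n) ℝ) (xstar sstar : Fin n → ℝ) : ℝ :=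
  max (⨆ j : Fin (n - m),
        Real.sqrt ((∑ i, (BN hmn A i j) ^ 2) + 1) / sstar (nIdx hmn j))
      (⨆ i : Fin m,
        Real.sqrt ((∑ j, (BN hmn A i j) ^ 2) + 1) / xstar (bIdx hmn i))

/-- The geometric condition number `Φ`. -/
def Phi (hmn : m ≤ n) (A : Matrix (Fin m) (Fin n) ℝ) (xstar sstar : Fin n → ℝ) : ℝ :=
  (l1 xstar + l1 sstar) * PhiFactor hmn A xstar sstar


/-- The first `m` indices form the unique optimal basis of the LP `(A, b, c)`:
there are (unique, nondegenerate) primal and dual optimal solutions whose supports are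
exactly the first `m` indices and its complement, respectively. -/
def UniqueOptBasis (hmn : m ≤ n) (A : Matrix (Fin m) (Fin n) ℝ) (b : Fin m → ℝ)
    (c : Fin n → ℝ) : Prop :=
  ∃ x y s, UniqueOpt hmn A b c x y s

/-- Stability of the optimal basis under perturbations of the cost vector `c`. -/
def zetaP (hmn : m ≤ n) (A : Matrix (Fin m) (Fin n) ℝ) (b : Fin m → ℝ) (c : Fin n → ℝ) : ℝ :=
  sInf {t | ∃ dc : Fin n → ℝ, t = enorm dc ∧ ¬ UniqueOptBasis hmn A b (c + dc)}

/-- Stability of the optimal basis under perturbations of the right-hand side `b`,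
measured in the `(AAᵀ)⁻¹`-norm. -/
def zetaD (hmn : m ≤ n) (A : Matrix (Fin m) (Fin n) ℝ) (b : Fin m → ℝ) (c : Fin n → ℝ) : ℝ :=
  sInf {t | ∃ db : Fin m → ℝ, t = Real.sqrt (db ⬝ᵥ ((A * Aᵀ)⁻¹ *ᵥ db)) ∧
    ¬ UniqueOptBasis hmn A (b + db) c}

/-- The optimal-solution set of the generic LP `min gᵀu` over `V ∩ ℝⁿ₊`. -/
def OPTset (V : Set (Fin n → ℝ)) (g : Fin n → ℝ) : Set (Fin n → ℝ) :=
  {u | (u ∈ V ∧ ∀ i, 0 ≤ u i) ∧ ∀ v, v ∈ V → (∀ i, 0 ≤ v i) → g ⬝ᵥ u ≤ g ⬝ᵥ v}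

/-- Stability under data perturbations of the generic LP `min gᵀu` over `V ∩ ℝⁿ₊`. -/
def genZeta (V : Set (Fin n → ℝ)) (g : Fin n → ℝ) : ℝ :=
  sInf {t | ∃ dg : Fin n → ℝ, t = enorm dg ∧ (OPTset V (g + dg)).Nonempty ∧
    ¬ OPTset V (g + dg) ⊆ OPTset V g}

/-- The primal affine subspace `V_p = q + Null(A)`. -/
def Vp (A : Matrix (Fin m) (Fin n) ℝ) (b : Fin m → ℝ) : Set (Fin n → ℝ) :=
  {x | ∃ v, A *ᵥ v = 0 ∧ x = qvec A b + v}

/-- The dual affine subspace `V_d = c + Im(Aᵀ)`. -/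
def Vd (A : Matrix (Fin m) (Fin n) ℝ) (c : Fin n → ℝ) : Set (Fin n → ℝ) :=
  {s | ∃ y, s = c + Aᵀ *ᵥ y}

/-! ### Auxiliary infrastructure -/

section Aux

variable {m n : ℕ}

lemma idx_cases (hmn : m ≤ n) (k : Fin n) :
    (∃ i, k = bIdx hmn i) ∨ ∃ j, k = nIdx hmn j := by
  rcases lt_or_ge (k : ℕ) m with hk | hk
  · exact Or.inl ⟨⟨k, hk⟩, by ext; rfl⟩
  · have hkn := k.isLt
    exact Or.inr ⟨⟨(k : ℕ) - m, by omega⟩, by ext; simp [nIdx]; omega⟩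

lemma nIdx_ge (hmn : m ≤ n) (j : Fin (n - m)) : m ≤ ((nIdx hmn j : Fin n) : ℕ) := by
  simp [nIdx]

lemma bIdx_lt (hmn : m ≤ n) (i : Fin m) : ((bIdx hmn i : Fin n) : ℕ) < m := i.isLt

lemma sum_split (hmn : m ≤ n) (f : Fin n → ℝ) :
    ∑ k, f k = (∑ i, f (bIdx hmn i)) + ∑ j, f (nIdx hmn j) := by
  have hmm : m + (n - m) = n := by omega
  rw [← Fin.sum_congr' f hmm, Fin.sum_univ_add]
  congr 1

/-- restriction to basic coordinates -/
def vB (hmn : m ≤ n) (x : Fin n → ℝ) : Fin m → ℝ := fun i => x (bIdx hmn i)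

/-- restriction to nonbasic coordinates -/
def vN (hmn : m ≤ n) (x : Fin n → ℝ) : Fin (n - m) → ℝ := fun j => x (nIdx hmn j)

/-- extension by zero of a basic vector -/
def ext0 (hmn : m ≤ n) (u : Fin m → ℝ) : Fin n → ℝ :=
  fun k => if hk : (k : ℕ) < m then u ⟨k, hk⟩ else 0

lemma ext0_b (hmn : m ≤ n) (u : Fin m → ℝ) (i : Fin m) : ext0 hmn u (bIdx hmn i) = u i := by
  simp [ext0, bIdx, Fin.castLE]

lemma ext0_n (hmn : m ≤ n) (u : Fin m → ℝ) (j : Fin (n - m)) : ext0 hmn u (nIdx hmn j) = 0 :=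
  dif_neg (by simp [nIdx])

lemma dot_split (hmn : m ≤ n) (u v : Fin n → ℝ) :
    u ⬝ᵥ v = vB hmn u ⬝ᵥ vB hmn v + vN hmn u ⬝ᵥ vN hmn v :=
  sum_split hmn (fun k => u k * v k)

lemma mulVec_split (hmn : m ≤ n) (A : Matrix (Fin m) (Fin n) ℝ) (x : Fin n → ℝ) :
    A *ᵥ x = Bmat hmn A *ᵥ vB hmn x + Nmat hmn A *ᵥ vN hmn x := by
  funext i
  simpa [Matrix.mulVec, dotProduct, Bmat, Nmat, vB, vN] using
    sum_split hmn (fun k => A i k * x k)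

lemma tmulVec_b (hmn : m ≤ n) (A : Matrix (Fin m) (Fin n) ℝ) (y : Fin m → ℝ) (i : Fin m) :
    (Aᵀ *ᵥ y) (bIdx hmn i) = ((Bmat hmn A)ᵀ *ᵥ y) i := by
  simp [Matrix.mulVec, dotProduct, Bmat, Matrix.transpose_apply, mul_comm]

lemma tmulVec_n (hmn : m ≤ n) (A : Matrix (Fin m) (Fin n) ℝ) (y : Fin m → ℝ) (j : Fin (n - m)) :
    (Aᵀ *ᵥ y) (nIdx hmn j) = ((Nmat hmn A)ᵀ *ᵥ y) j := by
  simp [Matrix.mulVec, dotProduct, Nmat, Matrix.transpose_apply, mul_comm]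


end Aux

section Core

variable {m n : ℕ} (hmn : m ≤ n) (A : Matrix (Fin m) (Fin n) ℝ)

/-- reduced costs at the basis -/
def rcost (c' : Fin n → ℝ) : Fin (n - m) → ℝ :=
  fun j => c' (nIdx hmn j) - ∑ i, BN hmn A i j * c' (bIdx hmn i)

/-- the candidate dual solution for cost `c'` -/
def yfun (c' : Fin n → ℝ) : Fin m → ℝ := ((Bmat hmn A)⁻¹)ᵀ *ᵥ (vB hmn c')

/-- the candidate dual slack for cost `c'` -/
def sfun (c' : Fin n → ℝ) : Fin n → ℝ := c' - Aᵀ *ᵥ yfun hmn A c'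

lemma tmul_dot (y : Fin m → ℝ) (v : Fin n → ℝ) :
    (Aᵀ *ᵥ y) ⬝ᵥ v = y ⬝ᵥ (A *ᵥ v) := by
  rw [Matrix.mulVec_transpose]
  exact (Matrix.dotProduct_mulVec _ _ _).symm

lemma dot_tmul (v : Fin n → ℝ) (y : Fin m → ℝ) :
    v ⬝ᵥ (Aᵀ *ᵥ y) = (A *ᵥ v) ⬝ᵥ y := by
  rw [dotProduct_comm, tmul_dot, dotProduct_comm]

lemma BtmulVec_yfun (hB : IsUnit (Bmat hmn A).det) (c' : Fin n → ℝ) :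
    (Bmat hmn A)ᵀ *ᵥ yfun hmn A c' = vB hmn c' := by
  rw [yfun, Matrix.mulVec_mulVec, ← Matrix.transpose_mul, Matrix.nonsing_inv_mul _ hB,
    Matrix.transpose_one, Matrix.one_mulVec]

lemma sfun_b (hB : IsUnit (Bmat hmn A).det) (c' : Fin n → ℝ) (i : Fin m) :
    sfun hmn A c' (bIdx hmn i) = 0 := by
  rw [sfun, Pi.sub_apply, tmulVec_b, BtmulVec_yfun hmn A hB]
  simp [vB]

lemma sfun_n (c' : Fin n → ℝ) (j : Fin (n - m)) :
    sfun hmn A c' (nIdx hmn j) = rcost hmn A c' j := by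
  rw [sfun, Pi.sub_apply, tmulVec_n, yfun, Matrix.mulVec_mulVec]
  have h2 : (Nmat hmn A)ᵀ * ((Bmat hmn A)⁻¹)ᵀ = (BN hmn A)ᵀ := by
    rw [BN, Matrix.transpose_mul]
  rw [h2, rcost]
  simp [Matrix.mulVec, dotProduct, Matrix.transpose_apply, vB, mul_comm]

lemma sfun_eq (c' : Fin n → ℝ) : c' = Aᵀ *ᵥ yfun hmn A c' + sfun hmn A c' := by
  rw [sfun]; ring

/-- Key value identity. -/
lemma Hval (hB : IsUnit (Bmat hmn A).det) (c' : Fin n → ℝ) {b' : Fin m → ℝ} {x : Fin n → ℝ}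
    (hx : A *ᵥ x = b') :
    c' ⬝ᵥ x = yfun hmn A c' ⬝ᵥ b' + ∑ j, rcost hmn A c' j * x (nIdx hmn j) := by
  conv_lhs => rw [sfun_eq hmn A c']
  rw [add_dotProduct, tmul_dot, hx, dot_split hmn (sfun hmn A c') x]
  congr 1
  have h1 : vB hmn (sfun hmn A c') ⬝ᵥ vB hmn x = 0 := by
    apply Finset.sum_eq_zero; intro i _
    simp [vB, sfun_b hmn A hB]
  rw [h1, zero_add]
  apply Finset.sum_congr rfl; intro j _
  simp [vN, sfun_n hmn A]

lemma basic_vB (hB : IsUnit (Bmat hmn A).det) {b' : Fin m → ℝ} {x : Fin n → ℝ}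
    (hx : A *ᵥ x = b') (hxN : ∀ j, x (nIdx hmn j) = 0) :
    vB hmn x = (Bmat hmn A)⁻¹ *ᵥ b' := by
  have hvN : vN hmn x = 0 := funext hxN
  have hsplit := mulVec_split hmn A x
  rw [hx, hvN, Matrix.mulVec_zero, add_zero] at hsplit
  rw [hsplit, Matrix.mulVec_mulVec, Matrix.nonsing_inv_mul _ hB, Matrix.one_mulVec]

lemma basic_eq (hB : IsUnit (Bmat hmn A).det) {b' : Fin m → ℝ} {x x' : Fin n → ℝ}
    (hx : A *ᵥ x = b') (hxN : ∀ j, x (nIdx hmn j) = 0) (hx' : A *ᵥ x' = b')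
    (hxN' : ∀ j, x' (nIdx hmn j) = 0) : x = x' := by
  have h1 := basic_vB hmn A hB hx hxN
  have h2 := basic_vB hmn A hB hx' hxN'
  funext k
  rcases idx_cases hmn k with ⟨i, rfl⟩ | ⟨j, rfl⟩
  · have := congrFun (h1.trans h2.symm) i
    simpa [vB] using this
  · rw [hxN j, hxN' j]

lemma ext0_mulVec (hB : IsUnit (Bmat hmn A).det) (b' : Fin m → ℝ) :
    A *ᵥ ext0 hmn ((Bmat hmn A)⁻¹ *ᵥ b') = b' := by
  rw [mulVec_split hmn A]
  have h1 : vB hmn (ext0 hmn ((Bmat hmn A)⁻¹ *ᵥ b')) = (Bmat hmn A)⁻¹ *ᵥ b' :=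
    funext fun i => ext0_b hmn _ i
  have h2 : vN hmn (ext0 hmn ((Bmat hmn A)⁻¹ *ᵥ b')) = 0 :=
    funext fun j => ext0_n hmn _ j
  rw [h1, h2, Matrix.mulVec_zero, add_zero, Matrix.mulVec_mulVec,
    Matrix.mul_nonsing_inv _ hB, Matrix.one_mulVec]

/-- recover `yfun`/`sfun` from a dual-feasible pair with vanishing basic slack -/
lemma dual_recover (hB : IsUnit (Bmat hmn A).det) {c' : Fin n → ℝ} {y : Fin m → ℝ}
    {s : Fin n → ℝ} (hfeas : Aᵀ *ᵥ y + s = c') (hsB : ∀ i, s (bIdx hmn i) = 0) :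
    y = yfun hmn A c' ∧ s = sfun hmn A c' := by
  have hBt : (Bmat hmn A)ᵀ *ᵥ y = vB hmn c' := by
    funext i
    have := congrFun hfeas (bIdx hmn i)
    rw [Pi.add_apply, tmulVec_b, hsB i, add_zero] at this
    exact this
  have hy : y = yfun hmn A c' := by
    rw [yfun, ← hBt, Matrix.mulVec_mulVec, ← Matrix.transpose_mul,
      Matrix.mul_nonsing_inv _ hB, Matrix.transpose_one, Matrix.one_mulVec]
  refine ⟨hy, ?_⟩
  rw [sfun, ← hy, ← hfeas]; ring

end Core
section Char

variable {m n : ℕ} {hmn : m ≤ n} {A : Matrix (Fin m) (Fin n) ℝ} {b : Fin m → ℝ}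
  {c : Fin n → ℝ} {xstar : Fin n → ℝ} {ystar : Fin m → ℝ} {sstar : Fin n → ℝ}

lemma xstar_nIdx (h : UniqueOpt hmn A b c xstar ystar sstar) (j : Fin (n - m)) :
    xstar (nIdx hmn j) = 0 := by
  have h1 : ¬ 0 < xstar (nIdx hmn j) := by
    rw [h.xstar_supp]
    have := nIdx_ge hmn j
    omega
  linarith [h.primal_feas.2 (nIdx hmn j)]

lemma xstar_bpos (h : UniqueOpt hmn A b c xstar ystar sstar) (i : Fin m) :
    0 < xstar (bIdx hmn i) := (h.xstar_supp _).mpr (bIdx_lt hmn i)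

lemma sstar_bIdx (h : UniqueOpt hmn A b c xstar ystar sstar) (i : Fin m) :
    sstar (bIdx hmn i) = 0 := by
  have h1 : ¬ 0 < sstar (bIdx hmn i) := by
    rw [h.sstar_supp]
    have := bIdx_lt hmn i
    omega
  linarith [h.dual_feas.2 (bIdx hmn i)]

lemma sstar_npos (h : UniqueOpt hmn A b c xstar ystar sstar) (j : Fin (n - m)) :
    0 < sstar (nIdx hmn j) := (h.sstar_supp _).mpr (nIdx_ge hmn j)

lemma star_recover (h : UniqueOpt hmn A b c xstar ystar sstar) :
    ystar = yfun hmn A c ∧ sstar = sfun hmn A c :=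
  dual_recover hmn A h.basis_isUnit h.dual_feas.1 (sstar_bIdx h)

lemma rc_c_pos (h : UniqueOpt hmn A b c xstar ystar sstar) (j : Fin (n - m)) :
    0 < rcost hmn A c j := by
  have h1 := sstar_npos h j
  rwa [(star_recover h).2, sfun_n] at h1

lemma xstar_vB (h : UniqueOpt hmn A b c xstar ystar sstar) :
    vB hmn xstar = (Bmat hmn A)⁻¹ *ᵥ b :=
  basic_vB hmn A h.basis_isUnit h.primal_feas.1 (xstar_nIdx h)

/-- dual objective identity -/
lemma dual_value (c' : Fin n → ℝ) {b' : Fin m → ℝ} {y' : Fin m → ℝ} {s' : Fin n → ℝ}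
    (x : Fin n → ℝ) (hx : A *ᵥ x = b') (hfeas : Aᵀ *ᵥ y' + s' = c') :
    b' ⬝ᵥ y' = c' ⬝ᵥ x - x ⬝ᵥ s' := by
  have h1 : x ⬝ᵥ (Aᵀ *ᵥ y') = b' ⬝ᵥ y' := by rw [dot_tmul, hx]
  have h2 : Aᵀ *ᵥ y' = c' - s' := eq_sub_of_add_eq hfeas
  rw [← h1, h2, dotProduct_sub, dotProduct_comm x c']

lemma dot_zero_of_supports {x s : Fin n → ℝ} (hxN : ∀ j, x (nIdx hmn j) = 0)
    (hsB : ∀ i, s (bIdx hmn i) = 0) : x ⬝ᵥ s = 0 := by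
  rw [dot_split hmn]
  have h1 : vB hmn x ⬝ᵥ vB hmn s = 0 :=
    Finset.sum_eq_zero fun i _ => by simp [vB, hsB i]
  have h2 : vN hmn x ⬝ᵥ vN hmn s = 0 :=
    Finset.sum_eq_zero fun j _ => by simp [vN, hxN j]
  rw [h1, h2, add_zero]

lemma basic_slack_zero {x s : Fin n → ℝ} (hxB : ∀ i, 0 < x (bIdx hmn i))
    (hxN : ∀ j, x (nIdx hmn j) = 0) (hs : ∀ k, 0 ≤ s k) (hdot : x ⬝ᵥ s = 0) :
    ∀ i, s (bIdx hmn i) = 0 := by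
  rw [dot_split hmn] at hdot
  have h2 : vN hmn x ⬝ᵥ vN hmn s = 0 :=
    Finset.sum_eq_zero fun j _ => by simp [vN, hxN j]
  rw [h2, add_zero] at hdot
  have hterms := (Finset.sum_eq_zero_iff_of_nonneg
    (fun i _ => mul_nonneg (hxB i).le (hs _))).mp hdot
  intro i
  rcases mul_eq_zero.mp (hterms i (Finset.mem_univ i)) with h0 | h0
  · exact absurd h0 (ne_of_gt (hxB i))
  · exact h0

lemma primal_opt_aux (hB : IsUnit (Bmat hmn A).det) {c' : Fin n → ℝ} {b' : Fin m → ℝ}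
    (hnn : ∀ j, 0 ≤ rcost hmn A c' j) {xref x : Fin n → ℝ} (hxref : A *ᵥ xref = b')
    (hxrefN : ∀ j, xref (nIdx hmn j) = 0) (hx : A *ᵥ x = b') (hxnn : ∀ k, 0 ≤ x k) :
    c' ⬝ᵥ xref ≤ c' ⬝ᵥ x := by
  rw [Hval hmn A hB c' hxref, Hval hmn A hB c' hx]
  have h1 : ∑ j, rcost hmn A c' j * xref (nIdx hmn j) = 0 :=
    Finset.sum_eq_zero fun j _ => by rw [hxrefN]; ring
  have h2 : 0 ≤ ∑ j, rcost hmn A c' j * x (nIdx hmn j) :=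
    Finset.sum_nonneg fun j _ => mul_nonneg (hnn j) (hxnn _)
  linarith

lemma primal_uniq_aux (hB : IsUnit (Bmat hmn A).det) {c' : Fin n → ℝ} {b' : Fin m → ℝ}
    (hpos : ∀ j, 0 < rcost hmn A c' j) {xref x : Fin n → ℝ} (hxref : A *ᵥ xref = b')
    (hxrefN : ∀ j, xref (nIdx hmn j) = 0) (hx : A *ᵥ x = b') (hxnn : ∀ k, 0 ≤ x k)
    (hxv : c' ⬝ᵥ x = c' ⬝ᵥ xref) : x = xref := by
  have h1 : ∑ j, rcost hmn A c' j * xref (nIdx hmn j) = 0 :=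
    Finset.sum_eq_zero fun j _ => by rw [hxrefN]; ring
  rw [Hval hmn A hB c' hxref, Hval hmn A hB c' hx, h1] at hxv
  have hsum : ∑ j, rcost hmn A c' j * x (nIdx hmn j) = 0 := by linarith
  have hterms := (Finset.sum_eq_zero_iff_of_nonneg
    (fun j _ => mul_nonneg (hpos j).le (hxnn _))).mp hsum
  have hxN : ∀ j, x (nIdx hmn j) = 0 := by
    intro j
    rcases mul_eq_zero.mp (hterms j (Finset.mem_univ j)) with h0 | h0
    · exact absurd h0 (ne_of_gt (hpos j))
    · exact h0
  exact basic_eq hmn A hB hx hxN hxref hxrefN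

/-- Construction of a `UniqueOpt` certificate from strict reduced costs. -/
lemma C1 (h : UniqueOpt hmn A b c xstar ystar sstar) {c' : Fin n → ℝ}
    (hpos : ∀ j, 0 < rcost hmn A c' j) :
    UniqueOpt hmn A b c' xstar (yfun hmn A c') (sfun hmn A c') := by
  have hB := h.basis_isUnit
  have hsB : ∀ i, sfun hmn A c' (bIdx hmn i) = 0 := sfun_b hmn A hB c'
  have hsN : ∀ j, sfun hmn A c' (nIdx hmn j) = rcost hmn A c' j := sfun_n hmn A c'
  have hs_nonneg : ∀ k, 0 ≤ sfun hmn A c' k := by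
    intro k
    rcases idx_cases hmn k with ⟨i, rfl⟩ | ⟨j, rfl⟩
    · rw [hsB]
    · rw [hsN]; exact (hpos j).le
  have hdfeas : DualFeasible A c' (yfun hmn A c') (sfun hmn A c') :=
    ⟨(sfun_eq hmn A c').symm, hs_nonneg⟩
  have hxs' : xstar ⬝ᵥ sfun hmn A c' = 0 := dot_zero_of_supports (xstar_nIdx h) hsB
  refine ⟨h.rows_indep, h.primal_feas, ?_, ?_, hdfeas, ?_, ?_, h.basis_isUnit,
    h.xstar_supp, ?_⟩
  · intro x hx
    exact primal_opt_aux hB (fun j => (hpos j).le) h.primal_feas.1 (xstar_nIdx h) hx.1 hx.2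
  · intro x hx hxv
    exact primal_uniq_aux hB hpos h.primal_feas.1 (xstar_nIdx h) hx.1 hx.2 hxv
  · intro y s hds
    rw [dual_value c' xstar h.primal_feas.1 hds.1,
      dual_value c' xstar h.primal_feas.1 hdfeas.1, hxs']
    have : 0 ≤ xstar ⬝ᵥ s := Finset.sum_nonneg fun k _ =>
      mul_nonneg (h.primal_feas.2 k) (hds.2 k)
    linarith
  · intro y s hds heq
    rw [dual_value c' xstar h.primal_feas.1 hds.1,
      dual_value c' xstar h.primal_feas.1 hdfeas.1, hxs'] at heq
    have hxs0 : xstar ⬝ᵥ s = 0 := by linarith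
    have hsB0 : ∀ i, s (bIdx hmn i) = 0 :=
      basic_slack_zero (xstar_bpos h) (xstar_nIdx h) hds.2 hxs0
    exact dual_recover hmn A hB hds.1 hsB0
  · intro k
    rcases idx_cases hmn k with ⟨i, rfl⟩ | ⟨j, rfl⟩
    · rw [hsB i]
      exact iff_of_false (lt_irrefl 0) (by have := bIdx_lt hmn i; omega)
    · rw [hsN j]
      exact iff_of_true (hpos j) (nIdx_ge hmn j)

/-- Construction of a `UniqueOpt` certificate from a strictly positive basic solution. -/
lemma C1d (h : UniqueOpt hmn A b c xstar ystar sstar) {b' : Fin m → ℝ}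
    (hpos : ∀ i, 0 < ((Bmat hmn A)⁻¹ *ᵥ b') i) :
    UniqueOpt hmn A b' c (ext0 hmn ((Bmat hmn A)⁻¹ *ᵥ b')) ystar sstar := by
  have hB := h.basis_isUnit
  set xb := (Bmat hmn A)⁻¹ *ᵥ b' with hxb
  have hfeas : A *ᵥ ext0 hmn xb = b' := ext0_mulVec hmn A hB b'
  have hxN : ∀ j, ext0 hmn xb (nIdx hmn j) = 0 := ext0_n hmn xb
  have hxB : ∀ i, ext0 hmn xb (bIdx hmn i) = xb i := ext0_b hmn xb
  have hxBpos : ∀ i, 0 < ext0 hmn xb (bIdx hmn i) := fun i => by rw [hxB]; exact hpos i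
  have hnn : ∀ k, 0 ≤ ext0 hmn xb k := by
    intro k
    rcases idx_cases hmn k with ⟨i, rfl⟩ | ⟨j, rfl⟩
    · exact (hxBpos i).le
    · rw [hxN]
  have hrc : ∀ j, 0 < rcost hmn A c j := rc_c_pos h
  have hxs : ext0 hmn xb ⬝ᵥ sstar = 0 := dot_zero_of_supports hxN (sstar_bIdx h)
  refine ⟨h.rows_indep, ⟨hfeas, hnn⟩, ?_, ?_, h.dual_feas, ?_, ?_, hB, ?_, h.sstar_supp⟩
  · intro x hx
    exact primal_opt_aux hB (fun j => (hrc j).le) hfeas hxN hx.1 hx.2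
  · intro x hx hxv
    exact primal_uniq_aux hB hrc hfeas hxN hx.1 hx.2 hxv
  · intro y s hds
    rw [dual_value c (ext0 hmn xb) hfeas hds.1,
      dual_value c (ext0 hmn xb) hfeas h.dual_feas.1, hxs]
    have : 0 ≤ ext0 hmn xb ⬝ᵥ s := Finset.sum_nonneg fun k _ =>
      mul_nonneg (hnn k) (hds.2 k)
    linarith
  · intro y s hds heq
    rw [dual_value c (ext0 hmn xb) hfeas hds.1,
      dual_value c (ext0 hmn xb) hfeas h.dual_feas.1, hxs] at heq
    have hxs0 : ext0 hmn xb ⬝ᵥ s = 0 := by linarith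
    have hsB0 : ∀ i, s (bIdx hmn i) = 0 := basic_slack_zero hxBpos hxN hds.2 hxs0
    have hrec := dual_recover hmn A hB hds.1 hsB0
    have hrec' := dual_recover hmn A hB h.dual_feas.1 (sstar_bIdx h)
    exact ⟨hrec.1.trans hrec'.1.symm, hrec.2.trans hrec'.2.symm⟩
  · intro k
    rcases idx_cases hmn k with ⟨i, rfl⟩ | ⟨j, rfl⟩
    · rw [hxB i]
      exact iff_of_true (hpos i) (bIdx_lt hmn i)
    · rw [hxN j]
      exact iff_of_false (lt_irrefl 0) (by have := nIdx_ge hmn j; omega)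

/-- From a unique-optimal-basis certificate, strict reduced costs and a strictly positive
basic solution. -/
lemma C2 {b' : Fin m → ℝ} {c' : Fin n → ℝ} (hu : UniqueOptBasis hmn A b' c') :
    (∀ j, 0 < rcost hmn A c' j) ∧ ∀ i, 0 < ((Bmat hmn A)⁻¹ *ᵥ b') i := by
  obtain ⟨x, y, s, hx⟩ := hu
  have hB := hx.basis_isUnit
  have hxN : ∀ j, x (nIdx hmn j) = 0 := xstar_nIdx hx
  have hsB : ∀ i, s (bIdx hmn i) = 0 := sstar_bIdx hx
  have hvB := basic_vB hmn A hB hx.primal_feas.1 hxN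
  constructor
  · intro j
    have hrec := dual_recover hmn A hB hx.dual_feas.1 hsB
    have hpos := sstar_npos hx j
    rwa [hrec.2, sfun_n] at hpos
  · intro i
    have hpos := xstar_bpos hx i
    have h2 : x (bIdx hmn i) = ((Bmat hmn A)⁻¹ *ᵥ b') i := congrFun hvB i
    rwa [h2] at hpos

lemma UOB_iff_P (h : UniqueOpt hmn A b c xstar ystar sstar) (c' : Fin n → ℝ) :
    UniqueOptBasis hmn A b c' ↔ ∀ j, 0 < rcost hmn A c' j :=
  ⟨fun hu => (C2 hu).1, fun hp => ⟨_, _, _, C1 h hp⟩⟩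

lemma UOB_iff_D (h : UniqueOpt hmn A b c xstar ystar sstar) (b' : Fin m → ℝ) :
    UniqueOptBasis hmn A b' c ↔ ∀ i, 0 < ((Bmat hmn A)⁻¹ *ᵥ b') i :=
  ⟨fun hu => (C2 hu).2, fun hp => ⟨_, _, _, C1d h hp⟩⟩

end Char
section OptSets

variable {m n : ℕ} {hmn : m ≤ n} {A : Matrix (Fin m) (Fin n) ℝ} {b : Fin m → ℝ}
  {c : Fin n → ℝ} {xstar : Fin n → ℝ} {ystar : Fin m → ℝ} {sstar : Fin n → ℝ}

lemma AAT_isUnit (hmn : m ≤ n) (A : Matrix (Fin m) (Fin n) ℝ)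
    (hB : IsUnit (Bmat hmn A).det) : IsUnit (A * Aᵀ).det := by
  rw [isUnit_iff_ne_zero]
  intro hdet
  obtain ⟨w, hw0, hw⟩ := (Matrix.exists_mulVec_eq_zero_iff).mpr hdet
  have h1 : (Aᵀ *ᵥ w) ⬝ᵥ (Aᵀ *ᵥ w) = 0 := by
    rw [tmul_dot, Matrix.mulVec_mulVec, hw, dotProduct_zero]
  have h2 : Aᵀ *ᵥ w = 0 := by
    funext k
    have := (Finset.sum_eq_zero_iff_of_nonneg
      (fun k _ => mul_self_nonneg ((Aᵀ *ᵥ w) k))).mp h1 k (Finset.mem_univ k)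
    exact mul_self_eq_zero.mp this
  have h3 : (Bmat hmn A)ᵀ *ᵥ w = 0 := by
    funext i
    have := congrFun h2 (bIdx hmn i)
    rwa [tmulVec_b] at this
  have h4 : w = 0 := by
    have h5 : ((Bmat hmn A)⁻¹)ᵀ *ᵥ ((Bmat hmn A)ᵀ *ᵥ w) = w := by
      rw [Matrix.mulVec_mulVec, ← Matrix.transpose_mul, Matrix.mul_nonsing_inv _ hB,
        Matrix.transpose_one, Matrix.one_mulVec]
    rw [← h5, h3, Matrix.mulVec_zero]
  exact hw0 h4

lemma A_qvec (hB : IsUnit (Bmat hmn A).det) (b' : Fin m → ℝ) : A *ᵥ qvec A b' = b' := by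
  rw [qvec, Matrix.mulVec_mulVec, Matrix.mulVec_mulVec,
    Matrix.mul_nonsing_inv _ (AAT_isUnit hmn A hB), Matrix.one_mulVec]

lemma qvec_add (A : Matrix (Fin m) (Fin n) ℝ) (b1 b2 : Fin m → ℝ) :
    qvec A (b1 + b2) = qvec A b1 + qvec A b2 := by
  simp [qvec, Matrix.mulVec_add]

lemma mem_Vp_iff (hB : IsUnit (Bmat hmn A).det) (x : Fin n → ℝ) :
    x ∈ Vp A b ↔ A *ᵥ x = b := by
  constructor
  · rintro ⟨v, hv, rfl⟩
    rw [Matrix.mulVec_add, A_qvec hB, hv, add_zero]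
  · intro hx
    refine ⟨x - qvec A b, ?_, by ring⟩
    rw [Matrix.mulVec_sub, hx, A_qvec hB, sub_self]

lemma ext0_nonneg (hmn : m ≤ n) {u : Fin m → ℝ} (hu : ∀ i, 0 ≤ u i) :
    ∀ k, 0 ≤ ext0 hmn u k := by
  intro k
  rw [ext0]
  split
  · exact hu _
  · exact le_refl 0

lemma OP1 (h : UniqueOpt hmn A b c xstar ystar sstar) {c' : Fin n → ℝ}
    (hnn : ∀ j, 0 ≤ rcost hmn A c' j) : xstar ∈ OPTset (Vp A b) c' := by
  have hB := h.basis_isUnit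
  refine ⟨⟨(mem_Vp_iff hB xstar).mpr h.primal_feas.1, h.primal_feas.2⟩, ?_⟩
  intro v hv hvnn
  exact primal_opt_aux hB hnn h.primal_feas.1 (xstar_nIdx h) ((mem_Vp_iff hB v).mp hv) hvnn

lemma OP2 (h : UniqueOpt hmn A b c xstar ystar sstar) {c' : Fin n → ℝ}
    (hpos : ∀ j, 0 < rcost hmn A c' j) : OPTset (Vp A b) c' ⊆ {xstar} := by
  intro u hu
  have hB := h.basis_isUnit
  have hufeas : A *ᵥ u = b := (mem_Vp_iff hB u).mp hu.1.1
  have hle : c' ⬝ᵥ u ≤ c' ⬝ᵥ xstar :=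
    hu.2 xstar ((mem_Vp_iff hB xstar).mpr h.primal_feas.1) h.primal_feas.2
  have hge : c' ⬝ᵥ xstar ≤ c' ⬝ᵥ u :=
    primal_opt_aux hB (fun j => (hpos j).le) h.primal_feas.1 (xstar_nIdx h) hufeas hu.1.2
  exact primal_uniq_aux hB hpos h.primal_feas.1 (xstar_nIdx h) hufeas hu.1.2
    (le_antisymm hle hge)

lemma sstar_mem_Vd (h : UniqueOpt hmn A b c xstar ystar sstar) : sstar ∈ Vd A c := by
  refine ⟨-ystar, ?_⟩
  have := h.dual_feas.1
  rw [Matrix.mulVec_neg]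
  funext k
  have h2 := congrFun this k
  simp only [Pi.add_apply, Pi.neg_apply] at h2 ⊢
  linarith

lemma HvalD (hmn : m ≤ n) (A : Matrix (Fin m) (Fin n) ℝ) {c : Fin n → ℝ}
    (hB : IsUnit (Bmat hmn A).det) (b' : Fin m → ℝ) {u : Fin n → ℝ} (hu : u ∈ Vd A c) :
    qvec A b' ⬝ᵥ u = qvec A b' ⬝ᵥ c - ext0 hmn ((Bmat hmn A)⁻¹ *ᵥ b') ⬝ᵥ c
      + ext0 hmn ((Bmat hmn A)⁻¹ *ᵥ b') ⬝ᵥ u := by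
  obtain ⟨y, rfl⟩ := hu
  have hx'' : A *ᵥ ext0 hmn ((Bmat hmn A)⁻¹ *ᵥ b') = b' := ext0_mulVec hmn A hB b'
  have h1 : qvec A b' ⬝ᵥ (Aᵀ *ᵥ y) = b' ⬝ᵥ y := by rw [dot_tmul, A_qvec hB]
  have h2 : ext0 hmn ((Bmat hmn A)⁻¹ *ᵥ b') ⬝ᵥ (Aᵀ *ᵥ y) = b' ⬝ᵥ y := by
    rw [dot_tmul, hx'']
  rw [dotProduct_add, dotProduct_add, h1, h2]
  ring

lemma OD1 (h : UniqueOpt hmn A b c xstar ystar sstar) {b' : Fin m → ℝ}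
    (hnn : ∀ i, 0 ≤ ((Bmat hmn A)⁻¹ *ᵥ b') i) : sstar ∈ OPTset (Vd A c) (qvec A b') := by
  have hB := h.basis_isUnit
  have hxs : ext0 hmn ((Bmat hmn A)⁻¹ *ᵥ b') ⬝ᵥ sstar = 0 :=
    dot_zero_of_supports (ext0_n hmn _) (sstar_bIdx h)
  refine ⟨⟨sstar_mem_Vd h, h.dual_feas.2⟩, ?_⟩
  intro v hv hvnn
  rw [HvalD hmn A hB b' (sstar_mem_Vd h), HvalD hmn A hB b' hv, hxs]
  have : 0 ≤ ext0 hmn ((Bmat hmn A)⁻¹ *ᵥ b') ⬝ᵥ v :=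
    Finset.sum_nonneg fun k _ => mul_nonneg (ext0_nonneg hmn hnn k) (hvnn k)
  linarith

lemma Vd_eq_of_basic_zero (hB : IsUnit (Bmat hmn A).det) {u u' : Fin n → ℝ}
    (hu : u ∈ Vd A c) (hu' : u' ∈ Vd A c) (huB : ∀ i, u (bIdx hmn i) = 0)
    (hu'B : ∀ i, u' (bIdx hmn i) = 0) : u = u' := by
  obtain ⟨y, rfl⟩ := hu
  obtain ⟨y', rfl⟩ := hu'
  have e1 : Aᵀ *ᵥ (-y) + (c + Aᵀ *ᵥ y) = c := by rw [Matrix.mulVec_neg]; ring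
  have e2 : Aᵀ *ᵥ (-y') + (c + Aᵀ *ᵥ y') = c := by rw [Matrix.mulVec_neg]; ring
  have r1 := dual_recover hmn A hB e1 huB
  have r2 := dual_recover hmn A hB e2 hu'B
  rw [r1.2, r2.2]

lemma OD2 (h : UniqueOpt hmn A b c xstar ystar sstar) {b' : Fin m → ℝ}
    (hpos : ∀ i, 0 < ((Bmat hmn A)⁻¹ *ᵥ b') i) :
    OPTset (Vd A c) (qvec A b') ⊆ {sstar} := by
  intro u hu
  have hB := h.basis_isUnit
  have hxs : ext0 hmn ((Bmat hmn A)⁻¹ *ᵥ b') ⬝ᵥ sstar = 0 :=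
    dot_zero_of_supports (ext0_n hmn _) (sstar_bIdx h)
  have hle : qvec A b' ⬝ᵥ u ≤ qvec A b' ⬝ᵥ sstar :=
    hu.2 sstar (sstar_mem_Vd h) h.dual_feas.2
  rw [HvalD hmn A hB b' hu.1.1, HvalD hmn A hB b' (sstar_mem_Vd h), hxs] at hle
  have hnn : 0 ≤ ext0 hmn ((Bmat hmn A)⁻¹ *ᵥ b') ⬝ᵥ u :=
    Finset.sum_nonneg fun k _ =>
      mul_nonneg (ext0_nonneg hmn (fun i => (hpos i).le) k) (hu.1.2 k)
  have h0 : ext0 hmn ((Bmat hmn A)⁻¹ *ᵥ b') ⬝ᵥ u = 0 := by linarith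
  have huB : ∀ i, u (bIdx hmn i) = 0 :=
    basic_slack_zero (fun i => by rw [ext0_b]; exact hpos i) (ext0_n hmn _) hu.1.2 h0
  exact Vd_eq_of_basic_zero hB hu.1.1 (sstar_mem_Vd h) huB (sstar_bIdx h)

lemma B_inv_b (h : UniqueOpt hmn A b c xstar ystar sstar) (i : Fin m) :
    ((Bmat hmn A)⁻¹ *ᵥ b) i = xstar (bIdx hmn i) := (congrFun (xstar_vB h) i).symm

lemma OPT_Vd_congr {g g' : Fin n → ℝ}
    (hg : ∀ y : Fin m → ℝ, g ⬝ᵥ (Aᵀ *ᵥ y) = g' ⬝ᵥ (Aᵀ *ᵥ y)) :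
    OPTset (Vd A c) g = OPTset (Vd A c) g' := by
  have key : ∀ (g1 g2 : Fin n → ℝ), (∀ y, g1 ⬝ᵥ (Aᵀ *ᵥ y) = g2 ⬝ᵥ (Aᵀ *ᵥ y)) →
      OPTset (Vd A c) g1 ⊆ OPTset (Vd A c) g2 := by
    intro g1 g2 hg12 u hu
    refine ⟨hu.1, ?_⟩
    intro v hv hvnn
    obtain ⟨yu, hyu⟩ := hu.1.1
    obtain ⟨yv, hyv⟩ := hv
    have h0 := hu.2 v ⟨yv, hyv⟩ hvnn
    rw [hyu, hyv, dotProduct_add, dotProduct_add] at h0 ⊢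
    have e1 := hg12 yu
    have e2 := hg12 yv
    linarith
  exact Set.Subset.antisymm (key g g' hg) (key g' g fun y => (hg y).symm)

end OptSets
section Scalars

lemma exists_theta {ι : Type*} [Fintype ι] (f g : ι → ℝ) (hf : ∀ i, 0 < f i) :
    ∃ θ : ℝ, 0 < θ ∧ ∀ i, θ * |g i| ≤ f i := by
  rcases isEmpty_or_nonempty ι with hι | hι
  · exact ⟨1, one_pos, fun i => (IsEmpty.false i).elim⟩
  · obtain ⟨i0, -, hi0⟩ := Finset.exists_min_image Finset.univ
      (fun i => f i / (1 + |g i|)) Finset.univ_nonempty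
    refine ⟨f i0 / (1 + |g i0|), div_pos (hf i0) (by positivity), ?_⟩
    intro i
    have h1 : f i0 / (1 + |g i0|) ≤ f i / (1 + |g i|) := hi0 i (Finset.mem_univ i)
    have h2 : (0:ℝ) < 1 + |g i| := by positivity
    have h3 : (f i / (1 + |g i|)) * |g i| ≤ f i := by
      rw [div_mul_eq_mul_div, div_le_iff₀ h2]
      nlinarith [abs_nonneg (g i), (hf i).le]
    exact le_trans (mul_le_mul_of_nonneg_right h1 (abs_nonneg _)) h3

lemma segment_boundary {ι : Type*} [Fintype ι] (r0 rd : ι → ℝ)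
    (hpos : ∀ j, 0 < r0 j) {j1 : ι} (hneg : r0 j1 + rd j1 ≤ 0) :
    ∃ t0 : ℝ, 0 < t0 ∧ t0 ≤ 1 ∧ (∀ j, 0 ≤ r0 j + t0 * rd j) ∧
      ∃ j', r0 j' + t0 * rd j' = 0 := by
  classical
  set J : Finset ι := Finset.univ.filter (fun j => rd j < 0) with hJ
  have hrd1 : rd j1 < 0 := by nlinarith [hpos j1]
  have hj1 : j1 ∈ J := Finset.mem_filter.mpr ⟨Finset.mem_univ _, hrd1⟩
  obtain ⟨js, hjs, hmin⟩ := Finset.exists_min_image J (fun j => r0 j / (-rd j)) ⟨j1, hj1⟩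
  have hrdjs : rd js < 0 := (Finset.mem_filter.mp hjs).2
  set t0 := r0 js / (-rd js) with ht0
  have ht0pos : 0 < t0 := div_pos (hpos js) (by linarith)
  have ht0le1 : t0 ≤ 1 := by
    have hm := hmin j1 hj1
    have h1 : r0 j1 / (-rd j1) ≤ 1 := by
      rw [div_le_one (by linarith)]; linarith
    linarith
  have hne : -rd js ≠ 0 := by linarith
  have hcancel : t0 * (-rd js) = r0 js := by
    rw [ht0]; exact div_mul_cancel₀ (r0 js) hne
  refine ⟨t0, ht0pos, ht0le1, ?_, js, by linarith [hcancel]⟩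
  intro j
  by_cases hj : rd j < 0
  · have hm := hmin j (Finset.mem_filter.mpr ⟨Finset.mem_univ j, hj⟩)
    have := (le_div_iff₀ (by linarith : (0:ℝ) < -rd j)).mp hm
    nlinarith
  · push_neg at hj
    nlinarith [hpos j, mul_nonneg ht0pos.le hj]

lemma enorm_nonneg' {k : ℕ} (v : Fin k → ℝ) : 0 ≤ enorm v := Real.sqrt_nonneg _

lemma enorm_eq_sqrt_dot {k : ℕ} (v : Fin k → ℝ) : enorm v = Real.sqrt (v ⬝ᵥ v) := by
  rw [enorm]
  congr 1
  exact Finset.sum_congr rfl fun i _ => sq (v i)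

lemma enorm_smul {k : ℕ} (t : ℝ) (v : Fin k → ℝ) : enorm (t • v) = |t| * enorm v := by
  rw [enorm, enorm, ← Real.sqrt_sq_eq_abs, ← Real.sqrt_mul (sq_nonneg t)]
  congr 1
  rw [Finset.mul_sum]
  exact Finset.sum_congr rfl fun i _ => by
    simp only [Pi.smul_apply, smul_eq_mul]; ring

end Scalars

section Norms

variable {m n : ℕ}

lemma qvec_dot_self {hmn : m ≤ n} {A : Matrix (Fin m) (Fin n) ℝ}
    (hB : IsUnit (Bmat hmn A).det) (w : Fin m → ℝ) :
    qvec A w ⬝ᵥ qvec A w = w ⬝ᵥ ((A * Aᵀ)⁻¹ *ᵥ w) := by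
  have h1 : qvec A w ⬝ᵥ qvec A w
      = ((A * Aᵀ)⁻¹ *ᵥ w) ⬝ᵥ (A *ᵥ qvec A w) := by
    rw [qvec, tmul_dot]
  rw [h1, A_qvec hB, dotProduct_comm]

lemma enorm_qvec {hmn : m ≤ n} {A : Matrix (Fin m) (Fin n) ℝ}
    (hB : IsUnit (Bmat hmn A).det) (w : Fin m → ℝ) :
    enorm (qvec A w) = Real.sqrt (w ⬝ᵥ ((A * Aᵀ)⁻¹ *ᵥ w)) := by
  rw [enorm_eq_sqrt_dot, qvec_dot_self hB]

lemma enorm_proj_le {hmn : m ≤ n} {A : Matrix (Fin m) (Fin n) ℝ}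
    (hB : IsUnit (Bmat hmn A).det) (dg : Fin n → ℝ) :
    enorm (qvec A (A *ᵥ dg)) ≤ enorm dg := by
  set P := qvec A (A *ᵥ dg) with hP
  have hPdg : P ⬝ᵥ dg = ((A * Aᵀ)⁻¹ *ᵥ (A *ᵥ dg)) ⬝ᵥ (A *ᵥ dg) := by
    rw [hP, qvec, tmul_dot]
  have hPP : P ⬝ᵥ P = P ⬝ᵥ dg := by
    rw [qvec_dot_self hB, hPdg, dotProduct_comm]
  have h0 : 0 ≤ (dg - P) ⬝ᵥ (dg - P) := Finset.sum_nonneg fun k _ => mul_self_nonneg _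
  have hexp : (dg - P) ⬝ᵥ (dg - P)
      = dg ⬝ᵥ dg - 2 * (P ⬝ᵥ dg) + P ⬝ᵥ P := by
    rw [sub_dotProduct, dotProduct_sub, dotProduct_sub,
      dotProduct_comm P dg]
    ring
  have hsq : P ⬝ᵥ P ≤ dg ⬝ᵥ dg := by nlinarith
  rw [enorm_eq_sqrt_dot, enorm_eq_sqrt_dot]
  exact Real.sqrt_le_sqrt hsq

end Norms
section Alt

variable {m n : ℕ} {hmn : m ≤ n} {A : Matrix (Fin m) (Fin n) ℝ} {b : Fin m → ℝ}
  {c : Fin n → ℝ} {xstar : Fin n → ℝ} {ystar : Fin m → ℝ} {sstar : Fin n → ℝ}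

lemma rcost_add (hmn : m ≤ n) (A : Matrix (Fin m) (Fin n) ℝ) (c1 c2 : Fin n → ℝ) :
    rcost hmn A (c1 + c2) = rcost hmn A c1 + rcost hmn A c2 := by
  funext j
  simp only [rcost, Pi.add_apply, mul_add, Finset.sum_add_distrib]
  ring

lemma rcost_smul (hmn : m ≤ n) (A : Matrix (Fin m) (Fin n) ℝ) (t : ℝ) (c1 : Fin n → ℝ) :
    rcost hmn A (t • c1) = t • rcost hmn A c1 := by
  funext j
  simp only [rcost, Pi.smul_apply, smul_eq_mul]
  rw [mul_sub, Finset.mul_sum]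
  congr 1
  exact Finset.sum_congr rfl fun i _ => by ring

lemma nIdx_injective (hmn : m ≤ n) : Function.Injective (nIdx hmn) := by
  intro j j' hjj
  have : m + (j : ℕ) = m + (j' : ℕ) := congrArg Fin.val hjj
  ext
  omega

/-- Alternate primal optimum at a degenerate reduced cost. -/
lemma AltP (h : UniqueOpt hmn A b c xstar ystar sstar) {c' : Fin n → ℝ}
    (hnn : ∀ j, 0 ≤ rcost hmn A c' j) {js : Fin (n - m)} (hz : rcost hmn A c' js = 0) :
    ∃ x', x' ∈ OPTset (Vp A b) c' ∧ x' ∉ OPTset (Vp A b) c := by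
  have hB := h.basis_isUnit
  obtain ⟨θ, hθpos, hθ⟩ := exists_theta (fun i => xstar (bIdx hmn i))
    (fun i => BN hmn A i js) (xstar_bpos h)
  classical
  set d : Fin n → ℝ := fun k =>
    if hk : (k : ℕ) < m then -(BN hmn A ⟨k.1, hk⟩ js)
    else if k = nIdx hmn js then 1 else 0 with hd
  have hdb : ∀ i, d (bIdx hmn i) = -(BN hmn A i js) := fun i => by
    simp [hd, bIdx, Fin.castLE]
  have hdn : ∀ j, d (nIdx hmn j) = if j = js then 1 else 0 := by
    intro j
    have hnot : ¬ ((nIdx hmn j : Fin n) : ℕ) < m := by simp [nIdx]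
    rw [hd]
    simp only []
    rw [dif_neg hnot]
    by_cases hjj : j = js
    · subst hjj; simp
    · rw [if_neg (fun hc => hjj (nIdx_injective hmn hc)), if_neg hjj]
  have hBBN : Bmat hmn A * BN hmn A = Nmat hmn A := by
    rw [BN, ← Matrix.mul_assoc, Matrix.mul_nonsing_inv _ hB, Matrix.one_mul]
  have hAd : A *ᵥ d = 0 := by
    rw [mulVec_split hmn A d]
    have h1 : vB hmn d = -(fun i => BN hmn A i js) := funext fun i => hdb i
    have h2 : vN hmn d = fun j => if j = js then (1:ℝ) else 0 := funext fun j => hdn j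
    have h3 : Bmat hmn A *ᵥ (fun i => BN hmn A i js) = fun i => Nmat hmn A i js := by
      funext i
      rw [← hBBN, Matrix.mul_apply]
      rfl
    have h4 : Nmat hmn A *ᵥ (fun j => if j = js then (1:ℝ) else 0)
        = fun i => Nmat hmn A i js := by
      funext i
      simp [Matrix.mulVec, dotProduct, mul_ite, mul_one, mul_zero]
    rw [h1, h2, Matrix.mulVec_neg, h3, h4]
    funext i
    simp
  set x' : Fin n → ℝ := xstar + θ • d with hx'
  have hx'feas : A *ᵥ x' = b := by
    rw [hx', Matrix.mulVec_add, Matrix.mulVec_smul, hAd, smul_zero, add_zero,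
      h.primal_feas.1]
  have hx'N : ∀ j, x' (nIdx hmn j) = θ * (if j = js then 1 else 0) := by
    intro j
    rw [hx']
    simp only [Pi.add_apply, Pi.smul_apply, smul_eq_mul]
    rw [xstar_nIdx h, hdn, zero_add]
  have hx'B : ∀ i, x' (bIdx hmn i) = xstar (bIdx hmn i) - θ * BN hmn A i js := by
    intro i
    rw [hx']
    simp only [Pi.add_apply, Pi.smul_apply, smul_eq_mul]
    rw [hdb]
    ring
  have hx'nn : ∀ k, 0 ≤ x' k := by
    intro k
    rcases idx_cases hmn k with ⟨i, rfl⟩ | ⟨j, rfl⟩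
    · rw [hx'B]
      have h5 := hθ i
      have h6 : BN hmn A i js ≤ |BN hmn A i js| := le_abs_self _
      nlinarith
    · rw [hx'N]
      by_cases hjj : j = js
      · rw [if_pos hjj]; linarith
      · rw [if_neg hjj]; simp
  have hsum : ∑ j, rcost hmn A c' j * x' (nIdx hmn j) = 0 := by
    apply Finset.sum_eq_zero
    intro j _
    rw [hx'N]
    by_cases hjj : j = js
    · subst hjj; rw [hz]; ring
    · rw [if_neg hjj]; ring
  have hval_eq : c' ⬝ᵥ x' = c' ⬝ᵥ xstar := by
    rw [Hval hmn A hB c' hx'feas, Hval hmn A hB c' h.primal_feas.1, hsum]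
    have : ∑ j, rcost hmn A c' j * xstar (nIdx hmn j) = 0 :=
      Finset.sum_eq_zero fun j _ => by rw [xstar_nIdx h]; ring
    rw [this]
  have hx'mem : x' ∈ OPTset (Vp A b) c' := by
    refine ⟨⟨(mem_Vp_iff hB x').mpr hx'feas, hx'nn⟩, ?_⟩
    intro v hv hvnn
    rw [hval_eq]
    exact primal_opt_aux hB hnn h.primal_feas.1 (xstar_nIdx h)
      ((mem_Vp_iff hB v).mp hv) hvnn
  have hne : x' ≠ xstar := by
    intro hc
    have h7 := congrFun hc (nIdx hmn js)
    rw [hx'N, if_pos rfl, xstar_nIdx h] at h7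
    nlinarith
  refine ⟨x', hx'mem, ?_⟩
  intro hc
  exact hne (OP2 h (rc_c_pos h) hc)

/-- Alternate dual optimum at a degenerate basic coordinate. -/
lemma AltD (h : UniqueOpt hmn A b c xstar ystar sstar) {b' : Fin m → ℝ}
    (hnn : ∀ i, 0 ≤ ((Bmat hmn A)⁻¹ *ᵥ b') i) {is : Fin m}
    (hz : ((Bmat hmn A)⁻¹ *ᵥ b') is = 0) :
    ∃ s', s' ∈ OPTset (Vd A c) (qvec A b') ∧ s' ∉ OPTset (Vd A c) (qvec A b) := by
  have hB := h.basis_isUnit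
  obtain ⟨θ, hθpos, hθ⟩ := exists_theta (fun j => sstar (nIdx hmn j))
    (fun j => BN hmn A is j) (sstar_npos h)
  classical
  set u : Fin m → ℝ := ((Bmat hmn A)⁻¹)ᵀ *ᵥ (Pi.single is 1) with hu
  set w : Fin n → ℝ := Aᵀ *ᵥ u with hw
  have hwB : ∀ i, w (bIdx hmn i) = (Pi.single is 1 : Fin m → ℝ) i := by
    intro i
    rw [hw, tmulVec_b, hu, Matrix.mulVec_mulVec, ← Matrix.transpose_mul,
      Matrix.nonsing_inv_mul _ hB, Matrix.transpose_one, Matrix.one_mulVec]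
  have hwN : ∀ j, w (nIdx hmn j) = BN hmn A is j := by
    intro j
    rw [hw, tmulVec_n, hu, Matrix.mulVec_mulVec]
    have h2 : (Nmat hmn A)ᵀ * ((Bmat hmn A)⁻¹)ᵀ = (BN hmn A)ᵀ := by
      rw [BN, Matrix.transpose_mul]
    rw [h2]
    simp [Matrix.mulVec, dotProduct, Matrix.transpose_apply, Pi.single_apply,
      mul_ite, mul_one, mul_zero]
  set s' : Fin n → ℝ := sstar + θ • w with hs'
  have hs'Vd : s' ∈ Vd A c := by
    obtain ⟨y0, hy0⟩ := sstar_mem_Vd h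
    refine ⟨y0 + θ • u, ?_⟩
    rw [hs', hy0, Matrix.mulVec_add, Matrix.mulVec_smul, hw]
    funext k
    simp only [Pi.add_apply, Pi.smul_apply, smul_eq_mul]
    ring
  have hs'B : ∀ i, s' (bIdx hmn i) = θ * (Pi.single is 1 : Fin m → ℝ) i := by
    intro i
    rw [hs']
    simp only [Pi.add_apply, Pi.smul_apply, smul_eq_mul]
    rw [sstar_bIdx h, hwB, zero_add]
  have hs'N : ∀ j, s' (nIdx hmn j) = sstar (nIdx hmn j) + θ * BN hmn A is j := by
    intro j
    rw [hs']
    simp only [Pi.add_apply, Pi.smul_apply, smul_eq_mul]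
    rw [hwN]
  have hs'nn : ∀ k, 0 ≤ s' k := by
    intro k
    rcases idx_cases hmn k with ⟨i, rfl⟩ | ⟨j, rfl⟩
    · rw [hs'B]
      rcases le_or_gt 0 ((Pi.single is 1 : Fin m → ℝ) i) with h5 | h5
      · positivity
      · exfalso
        rw [Pi.single_apply] at h5
        by_cases hii : i = is
        · rw [if_pos hii] at h5; linarith
        · rw [if_neg hii] at h5; linarith
    · rw [hs'N]
      have h5 := hθ j
      have h6 : -|BN hmn A is j| ≤ BN hmn A is j := neg_abs_le _
      nlinarith
  set xb := ext0 hmn ((Bmat hmn A)⁻¹ *ᵥ b') with hxb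
  have hxw : xb ⬝ᵥ w = 0 := by
    rw [dot_split hmn]
    have h1 : vB hmn xb ⬝ᵥ vB hmn w = 0 := by
      apply Finset.sum_eq_zero
      intro i _
      show xb (bIdx hmn i) * w (bIdx hmn i) = 0
      rw [hxb, ext0_b, hwB, Pi.single_apply]
      by_cases hii : i = is
      · subst hii; rw [if_pos rfl, hz]; ring
      · rw [if_neg hii]; ring
    have h2 : vN hmn xb ⬝ᵥ vN hmn w = 0 := by
      apply Finset.sum_eq_zero
      intro j _
      show xb (nIdx hmn j) * w (nIdx hmn j) = 0
      rw [hxb, ext0_n]; ring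
    rw [h1, h2, add_zero]
  have hxs : xb ⬝ᵥ sstar = 0 := dot_zero_of_supports (by rw [hxb]; exact ext0_n hmn _)
    (sstar_bIdx h)
  have hxs' : xb ⬝ᵥ s' = 0 := by
    rw [hs', dotProduct_add, dotProduct_smul, hxs, hxw]
    simp
  have hval_eq : qvec A b' ⬝ᵥ s' = qvec A b' ⬝ᵥ sstar := by
    rw [HvalD hmn A hB b' hs'Vd, HvalD hmn A hB b' (sstar_mem_Vd h), ← hxb, hxs, hxs']
  have hs'mem : s' ∈ OPTset (Vd A c) (qvec A b') := by
    refine ⟨⟨hs'Vd, hs'nn⟩, ?_⟩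
    intro v hv hvnn
    rw [hval_eq]
    exact (OD1 h hnn).2 v hv hvnn
  have hne : s' ≠ sstar := by
    intro hc
    have h7 := congrFun hc (bIdx hmn is)
    rw [hs'B, Pi.single_eq_same, sstar_bIdx h] at h7
    nlinarith
  refine ⟨s', hs'mem, ?_⟩
  intro hc
  refine hne (OD2 h ?_ hc)
  intro i
  rw [B_inv_b h]
  exact xstar_bpos h i

end Alt
section Final

lemma sInf_eq_of_dominating {S T : Set ℝ} (hST : ∀ t ∈ S, ∃ t' ∈ T, t' ≤ t)
    (hTS : ∀ t ∈ T, ∃ t' ∈ S, t' ≤ t) (hS0 : ∀ t ∈ S, (0:ℝ) ≤ t)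
    (hT0 : ∀ t ∈ T, (0:ℝ) ≤ t) : sInf S = sInf T := by
  rcases S.eq_empty_or_nonempty with hS | hS
  · have hT : T = ∅ := by
      rw [Set.eq_empty_iff_forall_notMem]
      intro t ht
      obtain ⟨t', ht', -⟩ := hTS t ht
      rw [hS] at ht'
      exact ht'
    rw [hS, hT]
  · have hT : T.Nonempty := by
      obtain ⟨t, ht⟩ := hS
      obtain ⟨t', ht', -⟩ := hST t ht
      exact ⟨t', ht'⟩
    apply le_antisymm
    · apply le_csInf hT
      intro t ht
      obtain ⟨t', ht', hle⟩ := hTS t ht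
      exact (csInf_le ⟨0, fun x hx => hS0 x hx⟩ ht').trans hle
    · apply le_csInf hS
      intro t ht
      obtain ⟨t', ht', hle⟩ := hST t ht
      exact (csInf_le ⟨0, fun x hx => hT0 x hx⟩ ht').trans hle

end Final
/-- Lemma 12 of the paper. Under the unique-optimum assumption, the
generic stability measure `ζ` of the primal LP (over `V_p = q + Null(A)` with cost `c`)
equals `ζ_p`, and the generic stability measure of the dual slack LP (over
`V_d = c + Im(Aᵀ)` with cost `q`) equals `ζ_d`. -/
theorem generic_zeta_eq_zetaP_zetaD (m n : ℕ) (hmn : m ≤ n)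
    (A : Matrix (Fin m) (Fin n) ℝ) (b : Fin m → ℝ) (c : Fin n → ℝ)
    (xstar : Fin n → ℝ) (ystar : Fin m → ℝ) (sstar : Fin n → ℝ)
    (h : UniqueOpt hmn A b c xstar ystar sstar) :
    genZeta (Vp A b) c = zetaP hmn A b c ∧
    genZeta (Vd A c) (qvec A b) = zetaD hmn A b c := by
  have hB := h.basis_isUnit
  constructor
  · -- primal part
    rw [genZeta, zetaP]
    apply sInf_eq_of_dominating
    · -- every generic perturbation destroys the unique optimal basis
      rintro t ⟨dg, rfl, hne, hnsub⟩
      refine ⟨enorm dg, ⟨dg, rfl, ?_⟩, le_refl _⟩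
      intro hu
      apply hnsub
      intro u hu'
      have hu'' : u = xstar := OP2 h (fun j => ((UOB_iff_P h (c + dg)).mp hu) j) hu'
      rw [hu'']
      exact OP1 h (fun j => (rc_c_pos h j).le)
    · -- every basis-destroying perturbation dominates a generic one
      rintro t ⟨dc, rfl, hnu⟩
      rw [UOB_iff_P h (c + dc)] at hnu
      push_neg at hnu
      obtain ⟨j1, hj1⟩ := hnu
      have hrc1 : rcost hmn A c j1 + rcost hmn A dc j1 ≤ 0 := by
        have := congrFun (rcost_add hmn A c dc) j1
        rw [Pi.add_apply] at this
        linarith [this ▸ hj1]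
      obtain ⟨t0, ht0pos, ht0le1, hnn0, js, hzs⟩ :=
        segment_boundary (rcost hmn A c) (rcost hmn A dc) (rc_c_pos h) hrc1
      set dg := t0 • dc with hdg
      have hrcdg : ∀ j, rcost hmn A (c + dg) j
          = rcost hmn A c j + t0 * rcost hmn A dc j := by
        intro j
        rw [rcost_add hmn A c dg, hdg, rcost_smul hmn A t0 dc]
        simp
      have hnn : ∀ j, 0 ≤ rcost hmn A (c + dg) j := fun j => by
        rw [hrcdg]; exact hnn0 j
      have hz : rcost hmn A (c + dg) js = 0 := by rw [hrcdg]; exact hzs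
      obtain ⟨x', hx'mem, hx'not⟩ := AltP h hnn hz
      refine ⟨enorm dg, ⟨dg, rfl, ⟨xstar, OP1 h hnn⟩, fun hsub => hx'not (hsub hx'mem)⟩, ?_⟩
      rw [hdg, enorm_smul, abs_of_pos ht0pos]
      calc t0 * enorm dc ≤ 1 * enorm dc :=
            mul_le_mul_of_nonneg_right ht0le1 (enorm_nonneg' dc)
        _ = enorm dc := one_mul _
    · rintro t ⟨dg, rfl, -⟩; exact enorm_nonneg' dg
    · rintro t ⟨dc, rfl, -⟩; exact enorm_nonneg' dc
  · -- dual part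
    rw [genZeta, zetaD]
    apply sInf_eq_of_dominating
    · rintro t ⟨dg, rfl, hne, hnsub⟩
      set db := A *ᵥ dg with hdb
      refine ⟨Real.sqrt (db ⬝ᵥ ((A * Aᵀ)⁻¹ *ᵥ db)), ⟨db, rfl, ?_⟩, ?_⟩
      · intro hu
        apply hnsub
        have hEq : OPTset (Vd A c) (qvec A b + dg) = OPTset (Vd A c) (qvec A (b + db)) := by
          apply OPT_Vd_congr
          intro y
          rw [qvec_add, add_dotProduct, add_dotProduct]
          congr 1
          rw [dot_tmul, dot_tmul, A_qvec hB, hdb]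
        rw [hEq]
        intro u hu'
        have hu'' : u = sstar := OD2 h (fun i => ((UOB_iff_D h (b + db)).mp hu) i) hu'
        rw [hu'']
        exact OD1 h (fun i => by rw [B_inv_b h]; exact (xstar_bpos h i).le)
      · rw [← enorm_qvec hB db, hdb]
        exact enorm_proj_le hB dg
    · rintro t ⟨db, rfl, hnu⟩
      rw [UOB_iff_D h (b + db)] at hnu
      push_neg at hnu
      obtain ⟨i1, hi1⟩ := hnu
      have hBlin : ∀ (t' : ℝ) (i : Fin m), ((Bmat hmn A)⁻¹ *ᵥ (b + t' • db)) i
          = ((Bmat hmn A)⁻¹ *ᵥ b) i + t' * ((Bmat hmn A)⁻¹ *ᵥ db) i := by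
        intro t' i
        rw [Matrix.mulVec_add, Matrix.mulVec_smul]
        simp
      have hbpos : ∀ i, 0 < ((Bmat hmn A)⁻¹ *ᵥ b) i := fun i => by
        rw [B_inv_b h]; exact xstar_bpos h i
      have hi1' : ((Bmat hmn A)⁻¹ *ᵥ b) i1 + ((Bmat hmn A)⁻¹ *ᵥ db) i1 ≤ 0 := by
        have := hBlin 1 i1
        rw [one_smul, one_mul] at this
        linarith [this ▸ hi1]
      obtain ⟨t0, ht0pos, ht0le1, hnn0, is, hzs⟩ :=
        segment_boundary ((Bmat hmn A)⁻¹ *ᵥ b) ((Bmat hmn A)⁻¹ *ᵥ db) hbpos hi1'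
      set b'' := b + t0 • db with hb''
      have hnn : ∀ i, 0 ≤ ((Bmat hmn A)⁻¹ *ᵥ b'') i := fun i => by
        rw [hb'', hBlin]; exact hnn0 i
      have hz : ((Bmat hmn A)⁻¹ *ᵥ b'') is = 0 := by rw [hb'', hBlin]; exact hzs
      obtain ⟨s', hs'mem, hs'not⟩ := AltD h hnn hz
      set dg := qvec A (t0 • db) with hdg
      have hqd : qvec A b + dg = qvec A b'' := by rw [hdg, hb'', qvec_add]
      refine ⟨enorm dg, ⟨dg, rfl, ?_, ?_⟩, ?_⟩
      · rw [hqd]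
        exact ⟨sstar, OD1 h hnn⟩
      · rw [hqd]
        exact fun hsub => hs'not (hsub hs'mem)
      · rw [hdg, enorm_qvec hB]
        have hsm : (t0 • db) ⬝ᵥ ((A * Aᵀ)⁻¹ *ᵥ (t0 • db))
            = t0 ^ 2 * (db ⬝ᵥ ((A * Aᵀ)⁻¹ *ᵥ db)) := by
          rw [Matrix.mulVec_smul, smul_dotProduct, dotProduct_smul]
          simp [smul_eq_mul]
          ring
        rw [hsm, Real.sqrt_mul (sq_nonneg t0), Real.sqrt_sq ht0pos.le]
        calc t0 * Real.sqrt (db ⬝ᵥ ((A * Aᵀ)⁻¹ *ᵥ db))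
            ≤ 1 * Real.sqrt (db ⬝ᵥ ((A * Aᵀ)⁻¹ *ᵥ db)) :=
              mul_le_mul_of_nonneg_right ht0le1 (Real.sqrt_nonneg _)
          _ = _ := one_mul _
    · rintro t ⟨dg, rfl, -⟩; exact enorm_nonneg' dg
    · rintro t ⟨db, rfl, -⟩; exact Real.sqrt_nonneg _

end LPPaper
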